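/- arXiv:1602.03647 — 2 statements merged into one kernel-verified Lean document; each statement's English description precedes it below -/
import Mathlib

section
/- Let m ≥ 2, let G be the graph on vertex set {1,…,p} (p ≥ m) whose edge set is exactly all pairs within a fixed set of m vertices (a single m-clique and no other edges), let (i,j) be an edge of this clique, and let G' be obtained from G by removing the edge (i,j). Then, writing m̄ = m − 1, the Ising distribution of G' satisfies E_{G'}[X_i X_j] ≥ 1 − 2 m̄ e^{λ} / (e^{m̄λ} + m̄ e^{λ}). -/
open Real Finset
open scoped Classical

noncomputable section

/-- Value of a spin: `true ↦ +1`, `false ↦ -1`. -/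
def confVal (b : Bool) : ℝ := if b then 1 else -1

/-- The Ising interaction `∑_{{i,j}∈E} x_i x_j` (each edge counted once). -/
def isingEnergy {p : ℕ} (G : SimpleGraph (Fin p)) (x : Fin p → Bool) : ℝ :=
  (1 / 2) * ∑ i : Fin p, ∑ j : Fin p,
    if G.Adj i j then confVal (x i) * confVal (x j) else 0

/-- The partition function `Z_G`. -/
def isingZ {p : ℕ} (lam : ℝ) (G : SimpleGraph (Fin p)) : ℝ :=
  ∑ x : Fin p → Bool, Real.exp (lam * isingEnergy G x)

/-- The ferromagnetic Ising distribution `P_G(x)`. -/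
def isingP {p : ℕ} (lam : ℝ) (G : SimpleGraph (Fin p)) (x : Fin p → Bool) : ℝ :=
  Real.exp (lam * isingEnergy G x) / isingZ lam G

/-- Kullback–Leibler divergence `D(P_G ‖ P_{G'})`. -/
def isingKL {p : ℕ} (lam : ℝ) (G G' : SimpleGraph (Fin p)) : ℝ :=
  ∑ x : Fin p → Bool, isingP lam G x * Real.log (isingP lam G x / isingP lam G' x)

/-- The correlation `E_G[X_i X_j]`. -/
def isingCorr {p : ℕ} (lam : ℝ) (G : SimpleGraph (Fin p)) (i j : Fin p) : ℝ :=
  ∑ x : Fin p → Bool, isingP lam G x * (confVal (x i) * confVal (x j))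

/-- Probability of an event under `P_G`. -/
def eventProb {p : ℕ} (lam : ℝ) (G : SimpleGraph (Fin p)) (S : Set (Fin p → Bool)) : ℝ :=
  ∑ x : Fin p → Bool, if x ∈ S then isingP lam G x else 0

/-- `P_G[X_i = X_j]`. -/
def isingProbEq {p : ℕ} (lam : ℝ) (G : SimpleGraph (Fin p)) (i j : Fin p) : ℝ :=
  eventProb lam G {x | x i = x j}

/-- The edge set of `G` as a `Finset`. -/
def edgeFin {p : ℕ} (G : SimpleGraph (Fin p)) : Finset (Sym2 (Fin p)) :=
  (Set.toFinite G.edgeSet).toFinset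

/-- The edit distance `|E Δ E'|` between two graphs. -/
def editDist {p : ℕ} (G G' : SimpleGraph (Fin p)) : ℕ :=
  ((edgeFin G \ edgeFin G') ∪ (edgeFin G' \ edgeFin G)).card

/-!
Write `n = m - 2` and `g t = exp (λ t² / 2)`. The energy of the clique minus `{i, j}` depends only
on the spins at `i`, `j` and on the number `k` of up spins among the other `n` clique vertices;
counting configurations, the two spins are free and `k` occurs with multiplicity `C(n, k)`.
Summing out the two spins turns the claim into
`e^{mλ} · 2 ∑ C(n,k) g(2k-n) ≤ (m - 1) ∑ C(n,k) (g(2k-n+2) + g(2k-n-2))`.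
If `e^{nλ} ≤ n + 1` this holds term by term, since `g(t+2) + g(t-2) ≥ 2 e^{2λ} g(t)`. Otherwise
`C(n,k) ≤ e^{2λk(n-k)}`, so every term on the left is at most `g(n)`, while the right-hand side
contains `g(n+2) = e^{2(n+1)λ} g(n)` twice.
-/

lemma confVal_mul_self (b : Bool) : confVal b * confVal b = 1 := by
  cases b <;> norm_num [confVal]

lemma isingEnergy_deleteEdges {p : ℕ} (G : SimpleGraph (Fin p)) {i j : Fin p} (h : G.Adj i j)
    (x : Fin p → Bool) :
    isingEnergy (G.deleteEdges {s(i, j)}) x = isingEnergy G x - confVal (x i) * confVal (x j) := by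
  have hsplit : ∀ a b, (if G.Adj a b then confVal (x a) * confVal (x b) else 0) =
      (if (G.deleteEdges {s(i, j)}).Adj a b then confVal (x a) * confVal (x b) else 0) +
        ((if a = i ∧ b = j then confVal (x a) * confVal (x b) else 0) +
          (if a = j ∧ b = i then confVal (x a) * confVal (x b) else 0)) := by
    intro a b
    simp only [SimpleGraph.deleteEdges_adj, Set.mem_singleton_iff, Sym2.eq_iff]
    by_cases hab : (a = i ∧ b = j) ∨ (a = j ∧ b = i)
    · rcases hab with ⟨rfl, rfl⟩ | ⟨rfl, rfl⟩ <;> simp [h, h.symm, h.ne, h.ne.symm]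
    · rw [not_or] at hab
      simp [hab.1, hab.2]
  simp only [isingEnergy, hsplit, sum_add_distrib, ite_and]
  simp
  ring

lemma isingEnergy_clique {p : ℕ} (C : Finset (Fin p)) (G : SimpleGraph (Fin p))
    (hG : ∀ a b, G.Adj a b ↔ a ≠ b ∧ a ∈ C ∧ b ∈ C) (x : Fin p → Bool) :
    isingEnergy G x = ((∑ v ∈ C, confVal (x v)) ^ 2 - #C) / 2 := by
  set s : Fin p → ℝ := fun a => if a ∈ C then confVal (x a) else 0
  have hsplit : ∀ a b, (if G.Adj a b then confVal (x a) * confVal (x b) else 0) =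
      s a * s b - (if a = b ∧ a ∈ C then 1 else 0) := by
    intro a b
    by_cases hab : a = b
    · subst hab
      by_cases ha : a ∈ C <;> simp [ha, s, confVal_mul_self]
    · by_cases ha : a ∈ C <;> by_cases hb : b ∈ C <;> simp [hG, ha, hb, hab, s]
  simp only [isingEnergy, hsplit, sum_sub_distrib, ← sum_mul_sum, ite_and]
  simp [s, sum_ite_mem, sq]
  ring

lemma isingCorr_eq_div {p : ℕ} (lam : ℝ) (G : SimpleGraph (Fin p)) (i j : Fin p) :
    isingCorr lam G i j = (∑ x, confVal (x i) * confVal (x j) * exp (lam * isingEnergy G x)) /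
      ∑ x, exp (lam * isingEnergy G x) := by
  simp only [isingCorr, isingP, isingZ, sum_div]
  exact sum_congr rfl fun x _ => by ring

section Configurations

variable {ι : Type*}

def upCount (R : Finset ι) (x : ι → Bool) : ℕ := #{v ∈ R | x v = true}

lemma sum_confVal_eq_two_mul_upCount_sub (R : Finset ι) (x : ι → Bool) :
    ∑ v ∈ R, confVal (x v) = 2 * upCount R x - #R := by
  have h : ∀ b, confVal b = 2 * (if b = true then 1 else 0) - 1 := by
    intro b; cases b <;> norm_num [confVal]
  simp only [h, sum_sub_distrib, ← mul_sum, sum_boole, upCount]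
  simp

variable [DecidableEq ι]

lemma upCount_update_of_notMem {R : Finset ι} {i : ι} (hi : i ∉ R) (x : ι → Bool)
    (c : Bool) :
    upCount R (Function.update x i c) = upCount R x := by
  unfold upCount
  congr 1
  exact filter_congr fun v hv => by rw [Function.update_of_ne (ne_of_mem_of_not_mem hv hi)]

variable [Fintype ι]

lemma card_upCount_eq_choose_mul (R : Finset ι) (k : ℕ) :
    #{x : ι → Bool | upCount R x = k} =
      (#R).choose k * #{x : ι → Bool | upCount R x = 0} := by
  rw [← card_powersetCard, ← card_product]
  have hA : ∀ {A : Finset ι} {y : ι → Bool}, A ⊆ R → (∀ v ∈ R, y v = false) →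
      {v ∈ R | (if v ∈ A then true else y v) = true} = A := by
    intro A y hAR hy
    ext v
    by_cases hv : v ∈ A
    · simp [hv, hAR hv]
    · simp +contextual [hv, hy]
  apply card_nbij' (fun x => ({v ∈ R | x v = true}, fun v => if v ∈ R then false else x v))
    (fun q v => if v ∈ q.1 then true else q.2 v)
  · intro x hx
    rw [mem_coe, mem_filter] at hx
    rw [mem_coe, mem_product, mem_powersetCard, mem_filter]
    refine ⟨⟨filter_subset _ _, hx.2⟩, mem_univ _, ?_⟩
    simp +contextual [upCount]
  · rintro ⟨A, y⟩ hq
    rw [mem_coe, mem_product, mem_powersetCard, mem_filter] at hq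
    obtain ⟨⟨hAR, hAk⟩, -, hy⟩ := hq
    simp only [upCount, card_eq_zero, filter_eq_empty_iff, Bool.not_eq_true] at hy
    rw [mem_coe, mem_filter, upCount, hA hAR hy]
    exact ⟨mem_univ _, hAk⟩
  · intro x _
    funext v
    by_cases hv : v ∈ R <;> cases h : x v <;> simp [hv, h]
  · rintro ⟨A, y⟩ hq
    rw [mem_coe, mem_product, mem_powersetCard, mem_filter] at hq
    obtain ⟨⟨hAR, -⟩, -, hy⟩ := hq
    simp only [upCount, card_eq_zero, filter_eq_empty_iff, Bool.not_eq_true] at hy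
    refine Prod.ext (hA hAR hy) (funext fun v => ?_)
    by_cases hv : v ∈ R
    · simp [hv, hy hv]
    · have hvA : v ∉ A := fun h => hv (hAR h)
      simp [hv, hvA]

lemma sum_comp_upCount (R : Finset ι) (h : ℕ → ℝ) :
    ∑ x, h (upCount R x) =
      #{x : ι → Bool | upCount R x = 0} *
        ∑ k ∈ range (#R + 1), ((#R).choose k : ℝ) * h k := by
  have hmaps : ∀ x ∈ (univ : Finset (ι → Bool)), upCount R x ∈ range (#R + 1) :=
    fun x _ => mem_range_succ_iff.2 (card_filter_le _ _)
  rw [← sum_fiberwise_of_maps_to hmaps, mul_sum]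
  refine sum_congr rfl fun k _ => ?_
  rw [sum_congr rfl fun x hx => by rw [(mem_filter.1 hx).2], sum_const, nsmul_eq_mul,
    card_upCount_eq_choose_mul]
  push_cast
  ring

lemma two_mul_sum_apply_eq_sum_sum (i : ι) (F : Bool → (ι → Bool) → ℝ)
    (hF : ∀ a x c, F a (Function.update x i c) = F a x) :
    2 * ∑ x, F (x i) x = ∑ x, ∑ a, F a x := by
  let flip : (ι → Bool) → (ι → Bool) := fun x => Function.update x i (!x i)
  have hflip : Function.Involutive flip := fun x => by simp [flip]
  have hsym : ∑ x, F (x i) x = ∑ x, F (!x i) x := by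
    rw [← Equiv.sum_comp (hflip.toPerm flip)]
    simp [flip, hF]
  rw [two_mul]
  nth_rewrite 2 [hsym]
  rw [← sum_add_distrib]
  refine sum_congr rfl fun x _ => ?_
  cases x i <;> simp [add_comm]

lemma four_mul_sum_apply_apply_eq_sum_sum_sum {i j : ι} (hij : i ≠ j)
    (F : Bool → Bool → (ι → Bool) → ℝ)
    (hFi : ∀ a b x c, F a b (Function.update x i c) = F a b x)
    (hFj : ∀ a b x c, F a b (Function.update x j c) = F a b x) :
    4 * ∑ x, F (x i) (x j) x = ∑ x, ∑ a, ∑ b, F a b x := by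
  have hi := two_mul_sum_apply_eq_sum_sum i (fun a x => F a (x j) x)
    (fun a x c => by simp [Function.update_of_ne hij.symm, hFi])
  have hj := two_mul_sum_apply_eq_sum_sum j (fun b x => ∑ a, F a b x)
    (fun b x c => by simp [hFj])
  rw [show (4 : ℝ) = 2 * 2 by norm_num, mul_assoc, hi, hj]
  exact sum_congr rfl fun x _ => sum_comm

lemma four_mul_sum_apply_apply_upCount {R : Finset ι} {i j : ι} (hij : i ≠ j) (hi : i ∉ R)
    (hj : j ∉ R) (φ : Bool → Bool → ℕ → ℝ) :
    4 * ∑ x, φ (x i) (x j) (upCount R x) =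
      #{x : ι → Bool | upCount R x = 0} *
        ∑ k ∈ range (#R + 1), ((#R).choose k : ℝ) * ∑ a, ∑ b, φ a b k := by
  rw [four_mul_sum_apply_apply_eq_sum_sum_sum hij (fun a b x => φ a b (upCount R x))
    (fun a b x c => by rw [upCount_update_of_notMem hi])
    (fun a b x c => by rw [upCount_update_of_notMem hj])]
  exact sum_comp_upCount R fun k => ∑ a, ∑ b, φ a b k

end Configurations

lemma choose_add_le_exp {lam : ℝ} (hlam : 0 ≤ lam) {k l : ℕ}
    (h : ((k + l : ℕ) : ℝ) + 1 ≤ exp ((k + l : ℕ) * lam)) :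
    ((k + l).choose k : ℝ) ≤ exp (2 * lam * k * l) := by
  wlog hkl : k ≤ l generalizing k l
  · rw [Nat.choose_symm_add, add_comm k l] at *
    calc ((l + k).choose l : ℝ) ≤ exp (2 * lam * l * k) := this h (by omega)
      _ = exp (2 * lam * k * l) := by ring_nf
  calc ((k + l).choose k : ℝ) ≤ ((k + l : ℕ) : ℝ) ^ k := by
        exact_mod_cast Nat.choose_le_pow _ _
    _ ≤ (((k + l : ℕ) : ℝ) + 1) ^ k := by gcongr; linarith
    _ ≤ exp ((k + l : ℕ) * lam) ^ k := by gcongr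
    _ = exp (k * ((k + l : ℕ) * lam)) := by rw [← Real.exp_nat_mul]
    _ ≤ exp (2 * lam * k * l) := by
      refine exp_le_exp.2 ?_
      have : 0 ≤ lam * k * (l - k) :=
        mul_nonneg (mul_nonneg hlam k.cast_nonneg) (sub_nonneg.2 (by exact_mod_cast hkl))
      push_cast
      linarith

lemma exp_mul_two_mul_exp_le {lam : ℝ} {n : ℕ} (h : exp (n * lam) ≤ n + 1) (t : ℝ) :
    exp ((n + 2) * lam) * (2 * exp (lam * t ^ 2 / 2)) ≤
      (n + 1) * (exp (lam * (t + 2) ^ 2 / 2) + exp (lam * (t - 2) ^ 2 / 2)) := by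
  have hcosh : 2 ≤ exp (2 * lam * t) + exp (-(2 * lam * t)) := by
    linarith [add_one_le_exp (2 * lam * t), add_one_le_exp (-(2 * lam * t))]
  have h2 : exp (n * lam) * 2 ≤ (n + 1) * (exp (2 * lam * t) + exp (-(2 * lam * t))) := by
    nlinarith [exp_pos (n * lam)]
  set E := exp (lam * t ^ 2 / 2 + 2 * lam)
  have hplus : exp (lam * (t + 2) ^ 2 / 2) = E * exp (2 * lam * t) := by
    rw [← exp_add]; ring_nf
  have hminus : exp (lam * (t - 2) ^ 2 / 2) = E * exp (-(2 * lam * t)) := by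
    rw [← exp_add]; ring_nf
  have hcenter : exp ((n + 2) * lam) * exp (lam * t ^ 2 / 2) = E * exp (n * lam) := by
    rw [← exp_add, ← exp_add]; ring_nf
  calc exp ((n + 2) * lam) * (2 * exp (lam * t ^ 2 / 2))
      = E * (exp (n * lam) * 2) := by linear_combination 2 * hcenter
    _ ≤ E * ((n + 1) * (exp (2 * lam * t) + exp (-(2 * lam * t)))) := by gcongr
    _ = (n + 1) * (exp (lam * (t + 2) ^ 2 / 2) + exp (lam * (t - 2) ^ 2 / 2)) := by
      rw [hplus, hminus]; ring

/-- The `k`-th term collects the configurations of `n` free spins with `k` of them up, whose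
magnetisation is `2k - n`; `s` is the magnetisation contributed by the two spins at `i` and `j`. -/
def cwSum (lam : ℝ) (n : ℕ) (s : ℝ) : ℝ :=
  ∑ k ∈ range (n + 1), (n.choose k : ℝ) * exp (lam * (2 * k - n + s) ^ 2 / 2)

lemma cwSum_pos (lam : ℝ) (n : ℕ) (s : ℝ) : 0 < cwSum lam n s :=
  sum_pos (fun _ hk => mul_pos (Nat.cast_pos.2 (Nat.choose_pos (mem_range_succ_iff.1 hk)))
    (exp_pos _)) nonempty_range_add_one

lemma cwSum_zero_le {lam : ℝ} (hlam : 0 ≤ lam) {n : ℕ} (h : (n : ℝ) + 1 ≤ exp (n * lam)) :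
    cwSum lam n 0 ≤ (n + 1) * exp (lam * n ^ 2 / 2) := by
  have hterm : ∀ k ∈ range (n + 1),
      (n.choose k : ℝ) * exp (lam * (2 * k - n + 0) ^ 2 / 2) ≤ exp (lam * n ^ 2 / 2) := by
    intro k hk
    obtain ⟨l, rfl⟩ := Nat.exists_eq_add_of_le (mem_range_succ_iff.1 hk)
    calc ((k + l).choose k : ℝ) * exp (lam * (2 * k - (k + l : ℕ) + 0) ^ 2 / 2)
        ≤ exp (2 * lam * k * l) * exp (lam * (2 * k - (k + l : ℕ) + 0) ^ 2 / 2) := by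
          gcongr; exact choose_add_le_exp hlam h
      _ = exp (lam * (k + l : ℕ) ^ 2 / 2) := by rw [← exp_add]; push_cast; ring_nf
  calc cwSum lam n 0 ≤ #(range (n + 1)) • exp (lam * n ^ 2 / 2) := sum_le_card_nsmul _ _ _ hterm
    _ = (n + 1) * exp (lam * n ^ 2 / 2) := by rw [card_range, nsmul_eq_mul]; push_cast; ring

lemma exp_le_cwSum_two (lam : ℝ) (n : ℕ) : exp (lam * (n + 2) ^ 2 / 2) ≤ cwSum lam n 2 := by
  rw [cwSum, sum_range_succ, Nat.choose_self]
  refine le_add_of_nonneg_of_le (sum_nonneg fun _ _ => by positivity) (le_of_eq ?_)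
  ring_nf

lemma exp_le_cwSum_neg_two (lam : ℝ) (n : ℕ) :
    exp (lam * (n + 2) ^ 2 / 2) ≤ cwSum lam n (-2) := by
  rw [cwSum, sum_range_succ', Nat.choose_zero_right]
  refine le_add_of_nonneg_of_le (sum_nonneg fun _ _ => by positivity) (le_of_eq ?_)
  push_cast; ring_nf

lemma exp_mul_two_mul_cwSum_le (lam : ℝ) (n : ℕ) :
    exp ((n + 2) * lam) * (2 * cwSum lam n 0) ≤ (n + 1) * (cwSum lam n 2 + cwSum lam n (-2)) := by
  rcases le_or_gt (exp (n * lam)) (n + 1) with hsmall | hlarge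
  · simp only [cwSum, mul_sum, ← sum_add_distrib]
    refine sum_le_sum fun k _ => ?_
    have hk := mul_le_mul_of_nonneg_left (exp_mul_two_mul_exp_le hsmall (2 * k - n))
      (Nat.cast_nonneg (n.choose k) : (0 : ℝ) ≤ n.choose k)
    rw [sub_eq_add_neg (2 * (k : ℝ) - n) 2] at hk
    rw [add_zero]
    linarith
  · have hlam : 0 < lam := by
      have : 1 < exp (n * lam) := by linarith [(Nat.cast_nonneg n : (0 : ℝ) ≤ n)]
      exact pos_of_mul_pos_right (one_lt_exp_iff.1 this) (Nat.cast_nonneg n)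
    have hcenter : exp ((n + 2) * lam) * exp (lam * n ^ 2 / 2) ≤ exp (lam * (n + 2) ^ 2 / 2) := by
      rw [← exp_add]
      exact exp_le_exp.2 (by nlinarith [(Nat.cast_nonneg n : (0 : ℝ) ≤ n)])
    calc exp ((n + 2) * lam) * (2 * cwSum lam n 0)
        ≤ exp ((n + 2) * lam) * (2 * ((n + 1) * exp (lam * n ^ 2 / 2))) := by
          gcongr; exact cwSum_zero_le hlam.le hlarge.le
      _ = (n + 1) * (2 * (exp ((n + 2) * lam) * exp (lam * n ^ 2 / 2))) := by ring
      _ ≤ (n + 1) * (2 * exp (lam * (n + 2) ^ 2 / 2)) := by gcongr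
      _ ≤ (n + 1) * (cwSum lam n 2 + cwSum lam n (-2)) := by
          gcongr; linarith [exp_le_cwSum_two lam n, exp_le_cwSum_neg_two lam n]

/-- `exp (λ E(x) + λ (n + 2) / 2)` for the clique on `n + 2` vertices minus the edge `{i, j}`,
where `a`, `b` are the spins at `i`, `j` and `k` of the other `n` spins are up. -/
def pairWeight (lam : ℝ) (n : ℕ) (a b : Bool) (k : ℕ) : ℝ :=
  exp (lam * ((confVal a + confVal b + (2 * k - n)) ^ 2 / 2 - confVal a * confVal b))

lemma sum_pairWeight (lam : ℝ) (n k : ℕ) :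
    ∑ a, ∑ b, pairWeight lam n a b k =
      exp (-lam) * (exp (lam * (2 * k - n + 2) ^ 2 / 2) + exp (lam * (2 * k - n + -2) ^ 2 / 2)) +
        2 * exp lam * exp (lam * (2 * k - n + 0) ^ 2 / 2) := by
  simp only [pairWeight, Fintype.sum_bool, confVal, if_true, Bool.false_eq_true, if_false]
  rw [mul_add, ← exp_add, ← exp_add, mul_assoc 2, ← exp_add]
  ring_nf

lemma sum_confVal_mul_pairWeight (lam : ℝ) (n k : ℕ) :
    ∑ a, ∑ b, confVal a * confVal b * pairWeight lam n a b k =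
      exp (-lam) * (exp (lam * (2 * k - n + 2) ^ 2 / 2) + exp (lam * (2 * k - n + -2) ^ 2 / 2)) -
        2 * exp lam * exp (lam * (2 * k - n + 0) ^ 2 / 2) := by
  simp only [pairWeight, Fintype.sum_bool, confVal, if_true, Bool.false_eq_true, if_false]
  rw [mul_add, ← exp_add, ← exp_add, mul_assoc 2, ← exp_add]
  ring_nf

lemma sum_choose_mul_sum_pairWeight (lam : ℝ) (n : ℕ) :
    ∑ k ∈ range (n + 1), (n.choose k : ℝ) * ∑ a, ∑ b, pairWeight lam n a b k =
      exp (-lam) * (cwSum lam n 2 + cwSum lam n (-2)) + 2 * exp lam * cwSum lam n 0 := by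
  simp only [sum_pairWeight, cwSum, mul_sum, ← sum_add_distrib]
  exact sum_congr rfl fun k _ => by ring

lemma sum_choose_mul_sum_confVal_mul_pairWeight (lam : ℝ) (n : ℕ) :
    ∑ k ∈ range (n + 1), (n.choose k : ℝ) *
        ∑ a, ∑ b, confVal a * confVal b * pairWeight lam n a b k =
      exp (-lam) * (cwSum lam n 2 + cwSum lam n (-2)) - 2 * exp lam * cwSum lam n 0 := by
  simp only [sum_confVal_mul_pairWeight, cwSum, mul_sum, ← sum_add_distrib, ← sum_sub_distrib]
  exact sum_congr rfl fun k _ => by ring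

lemma isingCorr_clique_deleteEdges {p n : ℕ} (lam : ℝ) (C : Finset (Fin p)) (hC : #C = n + 2)
    (G : SimpleGraph (Fin p)) (hG : ∀ a b, G.Adj a b ↔ a ≠ b ∧ a ∈ C ∧ b ∈ C)
    {i j : Fin p} (hi : i ∈ C) (hj : j ∈ C) (hij : i ≠ j) :
    isingCorr lam (G.deleteEdges {s(i, j)}) i j =
      (exp (-lam) * (cwSum lam n 2 + cwSum lam n (-2)) - 2 * exp lam * cwSum lam n 0) /
        (exp (-lam) * (cwSum lam n 2 + cwSum lam n (-2)) + 2 * exp lam * cwSum lam n 0) := by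
  set R := (C.erase i).erase j
  have hjC : j ∈ C.erase i := mem_erase.2 ⟨hij.symm, hj⟩
  have hR : #R = n := by rw [card_erase_of_mem hjC, card_erase_of_mem hi, hC]; rfl
  have hiR : i ∉ R := fun h => notMem_erase i C (mem_of_mem_erase h)
  have hjR : j ∉ R := notMem_erase j _
  have hweight : ∀ x, exp (lam * isingEnergy (G.deleteEdges {s(i, j)}) x) =
      exp (-(lam * (n + 2) / 2)) * pairWeight lam n (x i) (x j) (upCount R x) := by
    intro x
    have hsum : ∑ v ∈ C, confVal (x v) =
        confVal (x i) + confVal (x j) + (2 * upCount R x - n) := by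
      rw [← add_sum_erase C _ hi, ← add_sum_erase _ _ hjC,
        sum_confVal_eq_two_mul_upCount_sub, hR]
      ring
    rw [isingEnergy_deleteEdges G ((hG i j).2 ⟨hij, hi, hj⟩), isingEnergy_clique C G hG,
      hsum, hC, pairWeight, ← exp_add]
    push_cast; ring_nf
  have hsum : ∀ f : Bool → Bool → ℝ,
      4 * ∑ x, f (x i) (x j) * exp (lam * isingEnergy (G.deleteEdges {s(i, j)}) x) =
        exp (-(lam * (n + 2) / 2)) * #{x : Fin p → Bool | upCount R x = 0} *
          ∑ k ∈ range (n + 1), (n.choose k : ℝ) *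
            ∑ a, ∑ b, f a b * pairWeight lam n a b k := by
    intro f
    simp only [hweight, mul_left_comm (f _ _), ← mul_sum]
    rw [mul_left_comm, four_mul_sum_apply_apply_upCount hij hiR hjR
      (fun a b k => f a b * pairWeight lam n a b k), hR, mul_assoc]
  have hZ := hsum fun _ _ => 1
  have hN := hsum fun a b => confVal a * confVal b
  simp only [one_mul, sum_choose_mul_sum_pairWeight, sum_choose_mul_sum_confVal_mul_pairWeight]
    at hZ hN
  have hκ : exp (-(lam * (n + 2) / 2)) * (#{x : Fin p → Bool | upCount R x = 0} : ℝ) ≠ 0 := by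
    refine mul_ne_zero (exp_pos _).ne' (Nat.cast_ne_zero.2 (card_ne_zero.2 ⟨fun _ => false, ?_⟩))
    simp [upCount]
  rw [isingCorr_eq_div, ← mul_div_mul_left _ _ (four_ne_zero' ℝ), hN, hZ,
    mul_div_mul_left _ _ hκ]

lemma one_sub_two_mul_div_le_sub_div_add {a b A B : ℝ} (hab : 0 < a + b) (hAB : 0 < A + B)
    (h : a * B ≤ b * A) : 1 - 2 * b / (a + b) ≤ (A - B) / (A + B) := by
  rw [show 1 - 2 * b / (a + b) = (a - b) / (a + b) by field_simp; ring, div_le_div_iff₀ hab hAB]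
  linarith

theorem clique_minus_edge_corr_general {p m : ℕ} (lam : ℝ)
    (hm : 2 ≤ m)
    (C : Finset (Fin p)) (hC : C.card = m)
    (G G' : SimpleGraph (Fin p))
    (hG : ∀ a b, G.Adj a b ↔ a ≠ b ∧ a ∈ C ∧ b ∈ C)
    (i j : Fin p) (hi : i ∈ C) (hj : j ∈ C) (hij : i ≠ j)
    (hG' : G' = G.deleteEdges {s(i, j)}) :
    isingCorr lam G' i j ≥
      1 - 2 * ((m : ℝ) - 1) * Real.exp lam /
        (Real.exp (((m : ℝ) - 1) * lam) + ((m : ℝ) - 1) * Real.exp lam) := by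
  obtain ⟨n, rfl⟩ := Nat.exists_eq_add_of_le' hm
  have hm1 : ((n + 2 : ℕ) : ℝ) - 1 = n + 1 := by push_cast; ring
  rw [hG', isingCorr_clique_deleteEdges lam C hC G hG hi hj hij, hm1, ge_iff_le, mul_assoc 2]
  have := cwSum_pos lam n 0
  have := cwSum_pos lam n 2
  have := cwSum_pos lam n (-2)
  refine one_sub_two_mul_div_le_sub_div_add (by positivity) (by positivity) ?_
  calc exp ((n + 1) * lam) * (2 * exp lam * cwSum lam n 0)
      = exp ((n + 2) * lam) * (2 * cwSum lam n 0) := by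
        rw [show ((n : ℝ) + 2) * lam = (n + 1) * lam + lam by ring, exp_add]; ring
    _ ≤ (n + 1) * (cwSum lam n 2 + cwSum lam n (-2)) := exp_mul_two_mul_cwSum_le lam n
    _ = (n + 1) * exp lam * (exp (-lam) * (cwSum lam n 2 + cwSum lam n (-2))) := by
        rw [exp_neg]; field_simp

/-- Correlation lower bound for an `m`-clique with one edge removed. -/
theorem clique_minus_edge_corr {p m : ℕ} (lam : ℝ) (hlam : 0 < lam)
    (hm : 2 ≤ m) (hmp : m ≤ p)
    (C : Finset (Fin p)) (hC : C.card = m)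
    (G G' : SimpleGraph (Fin p))
    (hG : ∀ a b, G.Adj a b ↔ a ≠ b ∧ a ∈ C ∧ b ∈ C)
    (i j : Fin p) (hi : i ∈ C) (hj : j ∈ C) (hij : i ≠ j)
    (hG' : G' = G.deleteEdges {s(i, j)}) :
    isingCorr lam G' i j ≥
      1 - 2 * ((m : ℝ) - 1) * Real.exp lam /
        (Real.exp (((m : ℝ) - 1) * lam) + ((m : ℝ) - 1) * Real.exp lam) :=
  clique_minus_edge_corr_general lam hm C hC G G' hG i j hi hj hij hG'

end
end

section
/- Let m ≥ 2 and let G be any simple graph on vertex set {1,…,p} (p ≥ m) all of whose edges join vertices lying inside a fixed set of m vertices. Let G' be the empty graph on {1,…,p}. Then D(P_G‖P_{G'}) ≤ C(m,2) · λ · (e^{2λ} cosh(2λm) − 1) / (e^{2λ} cosh(2λm) + 1), where C(m,2) = m(m−1)/2. -/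
open Real Finset
open scoped Classical

noncomputable section

private lemma confVal_not (b : Bool) : confVal (!b) = - confVal b := by
  cases b <;> simp [confVal]
private lemma abs_confVal (b : Bool) : |confVal b| = 1 := by
  cases b <;> simp [confVal]
private lemma flip_bijective {p : ℕ} (i : Fin p) :
    Function.Bijective (fun x : Fin p → Bool => Function.update x i (!x i)) := by
  apply Function.Involutive.bijective
  intro x
  simp only [Function.update_self, Bool.not_not, Function.update_idem, Function.update_eq_self]
private lemma sum_confVal_pair {p : ℕ} {k l : Fin p} (h : k ≠ l) :
    ∑ x : Fin p → Bool, confVal (x k) * confVal (x l) = 0 := by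
  have key : ∑ x : Fin p → Bool, -(confVal (x k) * confVal (x l))
      = ∑ x : Fin p → Bool, confVal (x k) * confVal (x l) := by
    apply Fintype.sum_bijective _ (flip_bijective k)
    intro x
    have h1 : (Function.update x k (!x k)) k = !x k := Function.update_self _ _ _
    have h2 : (Function.update x k (!x k)) l = x l := Function.update_of_ne h.symm _ _
    rw [h1, h2, confVal_not]; ring
  rw [Finset.sum_neg_distrib] at key
  linarith
private lemma sum_update_bool {p : ℕ} (i : Fin p) (f : (Fin p → Bool) → ℝ) :
    ∑ x : Fin p → Bool, ∑ a : Bool, f (Function.update x i a)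
      = 2 * ∑ x : Fin p → Bool, f x := by
  have h1 : ∀ x : Fin p → Bool,
      ∑ a : Bool, f (Function.update x i a)
        = f x + f (Function.update x i (!x i)) := by
    intro x
    rw [Fintype.sum_bool]
    cases hxi : x i
    · rw [show Function.update x i false = x by
        conv_lhs => rw [← hxi]
        exact Function.update_eq_self i x]
      rw [Bool.not_false]
      ring
    · rw [show Function.update x i true = x by
        conv_lhs => rw [← hxi]
        exact Function.update_eq_self i x]
      rw [Bool.not_true]
  rw [Finset.sum_congr rfl (fun x _ => h1 x), Finset.sum_add_distrib]
  have h2 : ∑ x : Fin p → Bool, f (Function.update x i (!x i))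
      = ∑ x : Fin p → Bool, f x :=
    Fintype.sum_bijective _ (flip_bijective i) _ _ (fun x => rfl)
  rw [h2]; ring
private lemma upd2_i {p : ℕ} {i j : Fin p} (hij : i ≠ j) (x : Fin p → Bool) (a b : Bool) :
    (Function.update (Function.update x i a) j b) i = a := by
  rw [Function.update_of_ne hij, Function.update_self]
private lemma upd2_j {p : ℕ} {i j : Fin p} (x : Fin p → Bool) (a b : Bool) :
    (Function.update (Function.update x i a) j b) j = b := Function.update_self _ _ _
private lemma upd2_other {p : ℕ} {i j k : Fin p} (h1 : k ≠ i) (h2 : k ≠ j)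
    (x : Fin p → Bool) (a b : Bool) :
    (Function.update (Function.update x i a) j b) k = x k := by
  rw [Function.update_of_ne h2, Function.update_of_ne h1]
private lemma energy_update {p : ℕ} (G : SimpleGraph (Fin p)) {i j : Fin p}
    (hadj : G.Adj i j) (x : Fin p → Bool) (a b : Bool) :
    isingEnergy G (Function.update (Function.update x i a) j b)
      = confVal a * confVal b
        + confVal a * (∑ l ∈ (univ.erase i).erase j, if G.Adj i l then confVal (x l) else 0)
        + confVal b * (∑ l ∈ (univ.erase i).erase j, if G.Adj j l then confVal (x l) else 0)
        + (1/2) * ∑ k ∈ (univ.erase i).erase j, ∑ l ∈ (univ.erase i).erase j,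
            (if G.Adj k l then confVal (x k) * confVal (x l) else 0) := by
  have hij : i ≠ j := G.ne_of_adj hadj
  set z := Function.update (Function.update x i a) j b with hzdef
  set R := (univ.erase i).erase j with hR
  have hzi : z i = a := upd2_i hij x a b
  have hzj : z j = b := upd2_j x a b
  have hzR : ∀ k ∈ R, z k = x k := by
    intro k hk
    rw [Finset.mem_erase, Finset.mem_erase] at hk
    exact upd2_other hk.2.1 hk.1 x a b
  have hjmem : j ∈ univ.erase i := Finset.mem_erase.mpr ⟨hij.symm, Finset.mem_univ j⟩
  have hsplit : ∀ (f : Fin p → ℝ), ∑ k : Fin p, f k = f i + f j + ∑ k ∈ R, f k := by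
    intro f
    rw [← Finset.sum_erase_add univ f (Finset.mem_univ i),
        ← Finset.sum_erase_add (univ.erase i) f hjmem]
    ring
  set s := ∑ l ∈ R, (if G.Adj i l then confVal (x l) else 0) with hs
  set t := ∑ l ∈ R, (if G.Adj j l then confVal (x l) else 0) with ht
  have Fi : (∑ l : Fin p, if G.Adj i l then confVal (z i) * confVal (z l) else 0)
      = confVal a * confVal b + confVal a * s := by
    rw [hsplit]
    have t1 : (if G.Adj i i then confVal (z i) * confVal (z i) else 0) = 0 := by
      simp [G.irrefl]
    have t2 : (if G.Adj i j then confVal (z i) * confVal (z j) else 0)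
        = confVal a * confVal b := by rw [if_pos hadj, hzi, hzj]
    have t3 : ∑ l ∈ R, (if G.Adj i l then confVal (z i) * confVal (z l) else 0)
        = confVal a * s := by
      rw [hs, Finset.mul_sum]
      refine Finset.sum_congr rfl (fun l hl => ?_)
      rw [hzR l hl, hzi, mul_ite, mul_zero]
    rw [t1, t2, t3]; ring
  have Fj : (∑ l : Fin p, if G.Adj j l then confVal (z j) * confVal (z l) else 0)
      = confVal a * confVal b + confVal b * t := by
    rw [hsplit]
    have t1 : (if G.Adj j i then confVal (z j) * confVal (z i) else 0)
        = confVal a * confVal b := by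
      rw [if_pos (G.adj_symm hadj), hzi, hzj]; ring
    have t2 : (if G.Adj j j then confVal (z j) * confVal (z j) else 0) = 0 := by
      simp [G.irrefl]
    have t3 : ∑ l ∈ R, (if G.Adj j l then confVal (z j) * confVal (z l) else 0)
        = confVal b * t := by
      rw [ht, Finset.mul_sum]
      refine Finset.sum_congr rfl (fun l hl => ?_)
      rw [hzR l hl, hzj, mul_ite, mul_zero]
    rw [t1, t2, t3]; ring
  have FR : ∑ k ∈ R, (∑ l : Fin p, if G.Adj k l then confVal (z k) * confVal (z l) else 0)
      = confVal a * s + confVal b * t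
        + ∑ k ∈ R, ∑ l ∈ R, (if G.Adj k l then confVal (x k) * confVal (x l) else 0) := by
    have hterm : ∀ k ∈ R,
        (∑ l : Fin p, if G.Adj k l then confVal (z k) * confVal (z l) else 0)
          = (if G.Adj i k then confVal a * confVal (x k) else 0)
            + (if G.Adj j k then confVal b * confVal (x k) else 0)
            + ∑ l ∈ R, (if G.Adj k l then confVal (x k) * confVal (x l) else 0) := by
      intro k hk
      rw [hsplit]
      congr 1
      · congr 1
        · rw [hzR k hk, hzi]
          by_cases h : G.Adj k i
          · rw [if_pos h, if_pos (G.adj_symm h)]; ring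
          · rw [if_neg h, if_neg (fun h' => h (G.adj_symm h'))]
        · rw [hzR k hk, hzj]
          by_cases h : G.Adj k j
          · rw [if_pos h, if_pos (G.adj_symm h)]; ring
          · rw [if_neg h, if_neg (fun h' => h (G.adj_symm h'))]
      · refine Finset.sum_congr rfl (fun l hl => ?_)
        rw [hzR k hk, hzR l hl]
    rw [Finset.sum_congr rfl hterm, Finset.sum_add_distrib, Finset.sum_add_distrib]
    congr 2
    · rw [hs, Finset.mul_sum]
      refine Finset.sum_congr rfl (fun k _ => ?_)
      rw [mul_ite, mul_zero]
    · rw [ht, Finset.mul_sum]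
      refine Finset.sum_congr rfl (fun k _ => ?_)
      rw [mul_ite, mul_zero]
  simp only [isingEnergy]
  rw [hsplit (fun k => ∑ l : Fin p, if G.Adj k l then confVal (z k) * confVal (z l) else 0)]
  rw [Fi, Fj, FR]
  ring
private lemma one_le_A (lam M : ℝ) (hlam : 0 ≤ lam) :
    1 ≤ Real.exp (2*lam) * Real.cosh (2*lam*M) := by
  have h1 : 1 ≤ Real.exp (2*lam) := Real.one_le_exp (by linarith)
  have h2 : 1 ≤ Real.cosh (2*lam*M) := Real.one_le_cosh _
  nlinarith
private lemma key_real (lam M u w : ℝ) (hlam : 0 ≤ lam) (hM : 0 ≤ M)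
    (hu : |u| ≤ 2 * M) :
    (1 - (Real.exp (2*lam) * Real.cosh (2*lam*M) - 1) / (Real.exp (2*lam) * Real.cosh (2*lam*M) + 1))
        * (Real.exp (lam*(1+u)) + Real.exp (lam*(1-u)))
      ≤ (1 + (Real.exp (2*lam) * Real.cosh (2*lam*M) - 1) / (Real.exp (2*lam) * Real.cosh (2*lam*M) + 1))
        * (Real.exp (lam*(-1+w)) + Real.exp (lam*(-1-w))) := by
  set A := Real.exp (2*lam) * Real.cosh (2*lam*M) with hA
  have hA1 : 1 ≤ A := one_le_A lam M hlam
  have hApos : 0 < A + 1 := by linarith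
  have L : Real.exp (lam*(1+u)) + Real.exp (lam*(1-u))
      = Real.exp lam * (2 * Real.cosh (lam*u)) := by
    rw [Real.cosh_eq, show lam*(1+u) = lam + lam*u by ring,
        show lam*(1-u) = lam + -(lam*u) by ring, Real.exp_add, Real.exp_add]
    ring
  have Rw : Real.exp (lam*(-1+w)) + Real.exp (lam*(-1-w))
      = Real.exp (-lam) * (2 * Real.cosh (lam*w)) := by
    rw [Real.cosh_eq, show lam*(-1+w) = -lam + lam*w by ring,
        show lam*(-1-w) = -lam + -(lam*w) by ring, Real.exp_add, Real.exp_add]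
    ring
  rw [L, Rw]
  have e1 : 1 - (A-1)/(A+1) = 2/(A+1) := by field_simp; ring
  have e2 : 1 + (A-1)/(A+1) = 2*A/(A+1) := by field_simp; ring
  rw [e1, e2, div_mul_eq_mul_div, div_mul_eq_mul_div, div_le_div_iff₀ hApos hApos]
  have hAe : A * Real.exp (-lam) = Real.exp lam * Real.cosh (2*lam*M) := by
    rw [hA, show Real.exp (2*lam) * Real.cosh (2*lam*M) * Real.exp (-lam)
        = (Real.exp (2*lam) * Real.exp (-lam)) * Real.cosh (2*lam*M) by ring,
      ← Real.exp_add, show 2*lam + -lam = lam by ring]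
  have hcosh1 : Real.cosh (lam * u) ≤ Real.cosh (2*lam*M) := by
    rw [Real.cosh_le_cosh]
    have h1 : |lam * u| = lam * |u| := by rw [abs_mul, abs_of_nonneg hlam]
    have h2 : |2*lam*M| = 2*lam*M := abs_of_nonneg (by positivity)
    rw [h1, h2]
    nlinarith [abs_nonneg u]
  have hcosh2 : 1 ≤ Real.cosh (lam*w) := Real.one_le_cosh _
  have hexp : 0 < Real.exp lam := Real.exp_pos _
  have hcoshpos : 0 < Real.cosh (2*lam*M) := by
    have := Real.one_le_cosh (2*lam*M); linarith
  calc 2 * (Real.exp lam * (2 * Real.cosh (lam*u))) * (A + 1)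
      = (4 * (A+1)) * (Real.exp lam * Real.cosh (lam*u)) := by ring
    _ ≤ (4 * (A+1)) * (Real.exp lam * Real.cosh (2*lam*M)) := by
        have h4 : (0:ℝ) ≤ 4 * (A+1) := by linarith
        have := mul_le_mul_of_nonneg_left hcosh1 hexp.le
        nlinarith
    _ ≤ (4 * (A+1)) * ((Real.exp lam * Real.cosh (2*lam*M)) * Real.cosh (lam*w)) := by
        have h4 : (0:ℝ) ≤ 4 * (A+1) := by linarith
        have hpos : 0 < Real.exp lam * Real.cosh (2*lam*M) := mul_pos hexp hcoshpos
        exact mul_le_mul_of_nonneg_left (le_mul_of_one_le_right hpos.le hcosh2) h4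
    _ = 2*A * (Real.exp (-lam) * (2 * Real.cosh (lam*w))) * (A + 1) := by
        rw [← hAe]; ring
private lemma isingZ_pos {p : ℕ} (lam : ℝ) (G : SimpleGraph (Fin p)) : 0 < isingZ lam G :=
  Finset.sum_pos (fun _ _ => Real.exp_pos _) Finset.univ_nonempty
private lemma abs_s_le {p m : ℕ} {C : Finset (Fin p)} (hC : C.card = m)
    {G : SimpleGraph (Fin p)} (hG : ∀ a b, G.Adj a b → a ∈ C ∧ b ∈ C)
    (i : Fin p) (R : Finset (Fin p)) (x : Fin p → Bool) :
    |∑ l ∈ R, (if G.Adj i l then confVal (x l) else 0)| ≤ (m:ℝ) := by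
  calc |∑ l ∈ R, (if G.Adj i l then confVal (x l) else 0)|
      ≤ ∑ l ∈ R, |if G.Adj i l then confVal (x l) else 0| :=
        Finset.abs_sum_le_sum_abs _ _
    _ ≤ ∑ l ∈ R, (if l ∈ C then (1:ℝ) else 0) := by
        refine Finset.sum_le_sum (fun l _ => ?_)
        by_cases h : G.Adj i l
        · rw [if_pos h, if_pos (hG i l h).2, abs_confVal]
        · rw [if_neg h, abs_zero]
          by_cases hc : l ∈ C <;> simp [hc]
    _ = ((R.filter (fun l => l ∈ C)).card : ℝ) := by rw [Finset.sum_boole]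
    _ ≤ (C.card : ℝ) := by
        exact_mod_cast Finset.card_le_card (fun l hl => (Finset.mem_filter.mp hl).2)
    _ = (m:ℝ) := by rw [hC]
private lemma corr_bound {p m : ℕ} (lam : ℝ) (hlam : 0 < lam)
    (C : Finset (Fin p)) (hC : C.card = m)
    (G : SimpleGraph (Fin p)) (hG : ∀ a b, G.Adj a b → a ∈ C ∧ b ∈ C)
    {i j : Fin p} (hadj : G.Adj i j) :
    isingCorr lam G i j ≤
      (Real.exp (2*lam) * Real.cosh (2*lam*(m:ℝ)) - 1)
        / (Real.exp (2*lam) * Real.cosh (2*lam*(m:ℝ)) + 1) := by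
  have hij : i ≠ j := G.ne_of_adj hadj
  set B := (Real.exp (2*lam) * Real.cosh (2*lam*(m:ℝ)) - 1)
      / (Real.exp (2*lam) * Real.cosh (2*lam*(m:ℝ)) + 1) with hB
  have hZ : 0 < isingZ lam G := isingZ_pos lam G
  set g : (Fin p → Bool) → ℝ :=
    fun x => Real.exp (lam * isingEnergy G x) * (confVal (x i) * confVal (x j) - B) with hg
  have h1 : isingCorr lam G i j
      = (∑ x : Fin p → Bool,
          Real.exp (lam * isingEnergy G x) * (confVal (x i) * confVal (x j))) / isingZ lam G := by
    unfold isingCorr isingP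
    rw [Finset.sum_div]
    exact Finset.sum_congr rfl (fun x _ => div_mul_eq_mul_div _ _ _)
  suffices hsum : ∑ x : Fin p → Bool, g x ≤ 0 by
    rw [h1, div_le_iff₀ hZ]
    have hexpand : ∑ x : Fin p → Bool, g x
        = (∑ x : Fin p → Bool,
            Real.exp (lam * isingEnergy G x) * (confVal (x i) * confVal (x j)))
          - ∑ x : Fin p → Bool, B * Real.exp (lam * isingEnergy G x) := by
      rw [← Finset.sum_sub_distrib]
      exact Finset.sum_congr rfl (fun x _ => by simp only [hg]; ring)
    have hBZ : ∑ x : Fin p → Bool, B * Real.exp (lam * isingEnergy G x) = B * isingZ lam G := by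
      rw [← Finset.mul_sum]; rfl
    rw [hexpand, hBZ] at hsum
    linarith
  -- the 4-to-1 grouping
  have h4 : ∑ x : Fin p → Bool, ∑ a : Bool, ∑ b : Bool,
      g (Function.update (Function.update x i a) j b) = 4 * ∑ x : Fin p → Bool, g x := by
    calc ∑ x : Fin p → Bool, ∑ a : Bool, ∑ b : Bool,
          g (Function.update (Function.update x i a) j b)
        = 2 * ∑ x : Fin p → Bool, ∑ b : Bool, g (Function.update x j b) :=
          sum_update_bool i (fun w => ∑ b : Bool, g (Function.update w j b))
      _ = 2 * (2 * ∑ x : Fin p → Bool, g x) := by rw [sum_update_bool j g]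
      _ = 4 * ∑ x : Fin p → Bool, g x := by ring
  have hper : ∀ x : Fin p → Bool,
      ∑ a : Bool, ∑ b : Bool, g (Function.update (Function.update x i a) j b) ≤ 0 := by
    intro x
    set R := (univ.erase i).erase j with hR
    set s := ∑ l ∈ R, (if G.Adj i l then confVal (x l) else 0) with hs
    set t := ∑ l ∈ R, (if G.Adj j l then confVal (x l) else 0) with ht
    set r := (1/2) * ∑ k ∈ R, ∑ l ∈ R,
        (if G.Adj k l then confVal (x k) * confVal (x l) else 0) with hr
    have hE : ∀ a b : Bool,
        isingEnergy G (Function.update (Function.update x i a) j b)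
          = confVal a * confVal b + confVal a * s + confVal b * t + r :=
      fun a b => energy_update G hadj x a b
    have hsb : |s| ≤ (m:ℝ) := abs_s_le hC hG i R x
    have htb : |t| ≤ (m:ℝ) := abs_s_le hC hG j R x
    have husum : |s + t| ≤ 2 * (m:ℝ) := by
      calc |s + t| ≤ |s| + |t| := abs_add_le _ _
        _ ≤ 2 * (m:ℝ) := by linarith
    have key := key_real lam (m:ℝ) (s+t) (s-t) hlam.le (by positivity) husum
    rw [← hB] at key
    have h11 : g (Function.update (Function.update x i true) j true)
        = Real.exp (lam * ((1 + (s+t)) + r)) * (1 - B) := by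
      simp only [hg]
      rw [hE true true, upd2_i hij, upd2_j]
      have : confVal true * confVal true + confVal true * s + confVal true * t + r
          = (1 + (s+t)) + r := by simp [confVal]; ring
      rw [this]
      simp [confVal]
    have h10 : g (Function.update (Function.update x i true) j false)
        = Real.exp (lam * ((-1 + (s-t)) + r)) * (-1 - B) := by
      simp only [hg]
      rw [hE true false, upd2_i hij, upd2_j]
      have : confVal true * confVal false + confVal true * s + confVal false * t + r
          = (-1 + (s-t)) + r := by simp [confVal]; ring
      rw [this]
      simp [confVal]
    have h01 : g (Function.update (Function.update x i false) j true)
        = Real.exp (lam * ((-1 - (s-t)) + r)) * (-1 - B) := by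
      simp only [hg]
      rw [hE false true, upd2_i hij, upd2_j]
      have : confVal false * confVal true + confVal false * s + confVal true * t + r
          = (-1 - (s-t)) + r := by simp [confVal]; ring
      rw [this]
      simp [confVal]
    have h00 : g (Function.update (Function.update x i false) j false)
        = Real.exp (lam * ((1 - (s+t)) + r)) * (1 - B) := by
      simp only [hg]
      rw [hE false false, upd2_i hij, upd2_j]
      have : confVal false * confVal false + confVal false * s + confVal false * t + r
          = (1 - (s+t)) + r := by simp [confVal]; ring
      rw [this]
      simp [confVal]
    have hsplit : ∀ q : ℝ, Real.exp (lam * (q + r)) = Real.exp (lam * q) * Real.exp (lam * r) :=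
      fun q => by rw [mul_add, Real.exp_add]
    simp only [Fintype.sum_bool]
    rw [h11, h10, h01, h00, hsplit, hsplit, hsplit, hsplit]
    have hEr : (0:ℝ) < Real.exp (lam * r) := Real.exp_pos _
    have hmul := mul_le_mul_of_nonneg_left key hEr.le
    nlinarith [hmul]
  have htotal : ∑ x : Fin p → Bool, ∑ a : Bool, ∑ b : Bool,
      g (Function.update (Function.update x i a) j b) ≤ 0 :=
    Finset.sum_nonpos (fun x _ => hper x)
  rw [h4] at htotal
  linarith
private lemma sum_energy_zero {p : ℕ} (G : SimpleGraph (Fin p)) :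
    ∑ x : Fin p → Bool, isingEnergy G x = 0 := by
  have hkl : ∀ k l : Fin p,
      ∑ x : Fin p → Bool, (if G.Adj k l then confVal (x k) * confVal (x l) else 0) = 0 := by
    intro k l
    by_cases h : G.Adj k l
    · simp only [if_pos h]
      exact sum_confVal_pair (G.ne_of_adj h)
    · simp [h]
  simp only [isingEnergy]
  rw [← Finset.mul_sum]
  have : ∑ x : Fin p → Bool, ∑ k : Fin p, ∑ l : Fin p,
      (if G.Adj k l then confVal (x k) * confVal (x l) else 0) = 0 := by
    rw [Finset.sum_comm]
    refine Finset.sum_eq_zero (fun k _ => ?_)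
    rw [Finset.sum_comm]
    exact Finset.sum_eq_zero (fun l _ => hkl k l)
  rw [this, mul_zero]
private lemma card_conf {p : ℕ} : (Finset.univ : Finset (Fin p → Bool)).card = 2^p := by
  simp [Fintype.card_fun]
private lemma isingZ_ge {p : ℕ} (lam : ℝ) (G : SimpleGraph (Fin p)) :
    (2:ℝ)^p ≤ isingZ lam G := by
  calc (2:ℝ)^p = ∑ x : Fin p → Bool, (lam * isingEnergy G x + 1) := by
        rw [Finset.sum_add_distrib, ← Finset.mul_sum, sum_energy_zero, mul_zero, zero_add,
          Finset.sum_const, card_conf]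
        push_cast
        ring
    _ ≤ ∑ x : Fin p → Bool, Real.exp (lam * isingEnergy G x) :=
        Finset.sum_le_sum (fun x _ => Real.add_one_le_exp _)
    _ = isingZ lam G := rfl
private lemma sum_isingP {p : ℕ} (lam : ℝ) (G : SimpleGraph (Fin p)) :
    ∑ x : Fin p → Bool, isingP lam G x = 1 := by
  unfold isingP
  rw [← Finset.sum_div]
  exact div_self (isingZ_pos lam G).ne'
private lemma isingP_bot {p : ℕ} (lam : ℝ) (x : Fin p → Bool) :
    isingP lam ⊥ x = ((2:ℝ)^p)⁻¹ := by
  have hE : isingEnergy (⊥ : SimpleGraph (Fin p)) x = 0 := by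
    simp [isingEnergy]
  have hZ : isingZ lam (⊥ : SimpleGraph (Fin p)) = (2:ℝ)^p := by
    unfold isingZ
    have h1 : ∀ y : Fin p → Bool,
        Real.exp (lam * isingEnergy (⊥ : SimpleGraph (Fin p)) y) = 1 := by
      intro y
      have : isingEnergy (⊥ : SimpleGraph (Fin p)) y = 0 := by simp [isingEnergy]
      rw [this, mul_zero, Real.exp_zero]
    rw [Finset.sum_congr rfl (fun y _ => h1 y), Finset.sum_const, card_conf]
    push_cast
    ring
  unfold isingP
  rw [hE, mul_zero, Real.exp_zero, hZ, one_div]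
private lemma kl_le_avg_energy {p : ℕ} (lam : ℝ) (G : SimpleGraph (Fin p)) :
    isingKL lam G ⊥ ≤ lam * ∑ x : Fin p → Bool, isingP lam G x * isingEnergy G x := by
  have hZ : 0 < isingZ lam G := isingZ_pos lam G
  have h2p : (0:ℝ) < (2:ℝ)^p := by positivity
  have hlog : ∀ x : Fin p → Bool,
      Real.log (isingP lam G x / isingP lam ⊥ x)
        = lam * isingEnergy G x - Real.log (isingZ lam G) + p * Real.log 2 := by
    intro x
    rw [isingP_bot]
    unfold isingP
    rw [div_inv_eq_mul, Real.log_mul (by positivity) (by positivity),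
      Real.log_div (Real.exp_ne_zero _) hZ.ne', Real.log_exp, Real.log_pow]
  unfold isingKL
  have hterm : ∀ x : Fin p → Bool,
      isingP lam G x * Real.log (isingP lam G x / isingP lam ⊥ x)
        = lam * (isingP lam G x * isingEnergy G x)
          - (Real.log (isingZ lam G) - p * Real.log 2) * isingP lam G x := by
    intro x
    rw [hlog x]
    ring
  rw [Finset.sum_congr rfl (fun x _ => hterm x), Finset.sum_sub_distrib,
    ← Finset.mul_sum, ← Finset.mul_sum, sum_isingP, mul_one]
  have hlogZ : (p:ℝ) * Real.log 2 ≤ Real.log (isingZ lam G) := by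
    have := Real.log_le_log h2p (isingZ_ge lam G)
    rwa [Real.log_pow] at this
  linarith
private lemma avg_energy_eq {p : ℕ} (lam : ℝ) (G : SimpleGraph (Fin p)) :
    ∑ x : Fin p → Bool, isingP lam G x * isingEnergy G x
      = (1/2) * ∑ k : Fin p, ∑ l : Fin p, (if G.Adj k l then isingCorr lam G k l else 0) := by
  have hterm : ∀ x : Fin p → Bool,
      isingP lam G x * isingEnergy G x
        = (1/2) * ∑ k : Fin p, ∑ l : Fin p,
            (if G.Adj k l then isingP lam G x * (confVal (x k) * confVal (x l)) else 0) := by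
    intro x
    simp only [isingEnergy]
    rw [mul_left_comm]
    congr 1
    rw [Finset.mul_sum]
    refine Finset.sum_congr rfl (fun k _ => ?_)
    rw [Finset.mul_sum]
    refine Finset.sum_congr rfl (fun l _ => ?_)
    rw [mul_ite, mul_zero]
  rw [Finset.sum_congr rfl (fun x _ => hterm x), ← Finset.mul_sum]
  congr 1
  rw [Finset.sum_comm]
  refine Finset.sum_congr rfl (fun k _ => ?_)
  rw [Finset.sum_comm]
  refine Finset.sum_congr rfl (fun l _ => ?_)
  by_cases h : G.Adj k l
  · simp only [if_pos h]
    rfl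
  · simp [h]

/-- KL divergence from any graph supported on `m` vertices to the
empty graph (Lemma 4 of the paper). -/
theorem kl_group_to_empty {p m : ℕ} (lam : ℝ) (hlam : 0 < lam)
    (hm : 2 ≤ m) (hmp : m ≤ p)
    (C : Finset (Fin p)) (hC : C.card = m)
    (G : SimpleGraph (Fin p))
    (hG : ∀ a b, G.Adj a b → a ∈ C ∧ b ∈ C) :
    isingKL lam G ⊥ ≤
      (m.choose 2 : ℝ) * lam *
        (Real.exp (2 * lam) * Real.cosh (2 * lam * m) - 1) /
        (Real.exp (2 * lam) * Real.cosh (2 * lam * m) + 1) := by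
  set A := Real.exp (2 * lam) * Real.cosh (2 * lam * (m:ℝ)) with hA
  set B := (A - 1) / (A + 1) with hB
  have hA1 : 1 ≤ A := one_le_A lam m hlam.le
  have hBnn : 0 ≤ B := div_nonneg (by linarith) (by linarith)
  have hsub : (univ ×ˢ univ).filter (fun q : Fin p × Fin p => G.Adj q.1 q.2) ⊆ C.offDiag := by
    intro q hq
    have h := (Finset.mem_filter.mp hq).2
    exact Finset.mem_offDiag.mpr ⟨(hG _ _ h).1, (hG _ _ h).2, G.ne_of_adj h⟩
  have hmm : m ≤ m * m := Nat.le_mul_of_pos_left m (by omega)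
  have hcount : ∑ k : Fin p, ∑ l : Fin p, (if G.Adj k l then isingCorr lam G k l else 0)
      ≤ ((m:ℝ) * m - m) * B := by
    calc ∑ k : Fin p, ∑ l : Fin p, (if G.Adj k l then isingCorr lam G k l else 0)
        = ∑ q ∈ (univ ×ˢ univ).filter (fun q : Fin p × Fin p => G.Adj q.1 q.2),
            isingCorr lam G q.1 q.2 := by
          rw [Finset.sum_filter]
          exact (Finset.sum_product' _ _
            (fun k l => if G.Adj k l then isingCorr lam G k l else 0)).symm
      _ ≤ ∑ _q ∈ (univ ×ˢ univ).filter (fun q : Fin p × Fin p => G.Adj q.1 q.2), B :=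
          Finset.sum_le_sum
            (fun q hq => corr_bound lam hlam C hC G hG (Finset.mem_filter.mp hq).2)
      _ ≤ ∑ _q ∈ C.offDiag, B :=
          Finset.sum_le_sum_of_subset_of_nonneg hsub (fun _ _ _ => hBnn)
      _ = ((m:ℝ) * m - m) * B := by
          rw [Finset.sum_const, Finset.offDiag_card, hC, nsmul_eq_mul]
          congr 1
          rw [Nat.cast_sub hmm]
          push_cast
          ring
  have h1 := kl_le_avg_energy lam G
  rw [avg_energy_eq] at h1
  have h2 : lam * ((1/2) * ∑ k : Fin p, ∑ l : Fin p,
        (if G.Adj k l then isingCorr lam G k l else 0))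
      ≤ lam * ((1/2) * (((m:ℝ) * m - m) * B)) := by
    refine mul_le_mul_of_nonneg_left ?_ hlam.le
    refine mul_le_mul_of_nonneg_left hcount (by norm_num)
  have hdvd : 2 ∣ m * (m - 1) := by
    have h1' : m - 1 + 1 = m := by omega
    have h2' := Nat.even_mul_succ_self (m - 1)
    rw [h1'] at h2'
    rw [mul_comm]
    exact h2'.two_dvd
  have hnat : m.choose 2 * 2 = m * (m - 1) := by
    rw [Nat.choose_two_right, Nat.div_mul_cancel hdvd]
  have hcast : (m.choose 2 : ℝ) * 2 = (m:ℝ) * ((m:ℝ) - 1) := by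
    have hh := congrArg (Nat.cast : ℕ → ℝ) hnat
    push_cast [Nat.cast_sub (show 1 ≤ m by omega)] at hh
    exact hh
  have hch : (m.choose 2 : ℝ) = ((m:ℝ) * m - m) / 2 := by
    have : (m:ℝ) * ((m:ℝ) - 1) = (m:ℝ) * m - m := by ring
    linarith
  calc isingKL lam G ⊥ ≤ lam * ((1/2) * (((m:ℝ) * m - m) * B)) := le_trans h1 h2
    _ = (m.choose 2 : ℝ) * lam * (A - 1) / (A + 1) := by
        rw [hch, hB]
        ring

end
end
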